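/- arXiv:1904.04676 — 3 statements merged into one kernel-verified Lean document; each statement's English description precedes it below -/
import Mathlib

section
/- If f : ℝ^d → ℝ^d is continuously differentiable with lower triangular Jacobian everywhere whose diagonal entries are all strictly positive, then f is injective. -/
/-!
Induct on the coordinate `i`. If `f x = f y` and `x, y` agree below `i`, then along the segment
from `y` to `x` the derivative of the `i`-th component is `(x i - y i) * ∂ᵢfᵢ`: the entries left of
the diagonal meet zero coordinates of `x - y`, those right of it vanish by triangularity. By Rolle
this derivative vanishes somewhere, and `∂ᵢfᵢ > 0` forces `x i = y i`.
-/

theorem LinearMap.apply_eq_mul_diag_of_lowerTriangular {R ι : Type*} [CommSemiring R]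
    [Fintype ι] [DecidableEq ι] [LinearOrder ι] (L : (ι → R) →ₗ[R] ι → R) (i : ι)
    (hL : ∀ j, i < j → L (Pi.single j 1) i = 0) (v : ι → R) (hv : ∀ j < i, v j = 0) :
    L v i = v i * L (Pi.single i 1) i := by
  have hsum : L v i = ∑ j, v j * L (Pi.single j 1) i := by
    conv_lhs => rw [← Finset.univ_sum_single v]
    simp only [map_sum, Finset.sum_apply]
    refine Finset.sum_congr rfl fun j _ => ?_
    rw [← smul_eq_mul, ← Pi.smul_apply, ← map_smul, ← Pi.single_smul, smul_eq_mul, mul_one]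
  rw [hsum, Finset.sum_eq_single i]
  · intro j _ hji
    rcases hji.lt_or_gt with hj | hj
    · rw [hv j hj, zero_mul]
    · rw [hL j hj, mul_zero]
  · simp

theorem Differentiable.hasDerivAt_apply_add_smul {ι : Type*} [Fintype ι] {f : (ι → ℝ) → ι → ℝ}
    (hf : Differentiable ℝ f) (x v : ι → ℝ) (i : ι) (t : ℝ) :
    HasDerivAt (fun s : ℝ => f (x + s • v) i) (fderiv ℝ f (x + t • v) v i) t := by
  have hline : HasDerivAt (fun s : ℝ => x + s • v) v t := by
    simpa using ((hasDerivAt_id t).smul_const v).const_add x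
  exact hasDerivAt_pi.1 ((hf _).hasFDerivAt.comp_hasDerivAt t hline) i

theorem apply_eq_of_lowerTriangular_fderiv {ι : Type*} [Fintype ι] [DecidableEq ι]
    [LinearOrder ι] {f : (ι → ℝ) → ι → ℝ} (hf : Differentiable ℝ f) (i : ι)
    (hlt : ∀ x j, i < j → fderiv ℝ f x (Pi.single j 1) i = 0)
    (hpos : ∀ x, 0 < fderiv ℝ f x (Pi.single i 1) i) {x y : ι → ℝ}
    (hfxy : f x i = f y i) (hxy : ∀ j < i, x j = y j) : x i = y i := by
  have hderiv (t : ℝ) : HasDerivAt (fun s : ℝ => f (y + s • (x - y)) i)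
      ((x i - y i) * fderiv ℝ f (y + t • (x - y)) (Pi.single i 1) i) t := by
    convert hf.hasDerivAt_apply_add_smul y (x - y) i t using 1
    exact ((fderiv ℝ f _).toLinearMap.apply_eq_mul_diag_of_lowerTriangular i (hlt _) (x - y)
      fun j hj => sub_eq_zero.2 (hxy j hj)).symm
  obtain ⟨c, -, hc⟩ := exists_hasDerivAt_eq_zero zero_lt_one
    (fun t _ => (hderiv t).continuousAt.continuousWithinAt) (by simp [hfxy]) fun t _ => hderiv t
  exact sub_eq_zero.1 ((mul_eq_zero.1 hc).resolve_right (hpos _).ne')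

/-- A C¹ map with everywhere lower triangular Jacobian with strictly positive
diagonal entries is injective. -/
theorem injective_of_lower_triangular_pos_diag_jacobian
    (d : ℕ) (f : (Fin d → ℝ) → (Fin d → ℝ))
    (hf : ContDiff ℝ 1 f)
    (hlt : ∀ (x : Fin d → ℝ) (i j : Fin d), i < j →
      fderiv ℝ f x (Pi.single j 1) i = 0)
    (hpos : ∀ (x : Fin d → ℝ) (i : Fin d), 0 < fderiv ℝ f x (Pi.single i 1) i) :
    Function.Injective f := by
  intro x y hxy
  funext i
  induction i using WellFoundedLT.induction with
  | ind i ih =>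
    exact apply_eq_of_lowerTriangular_fderiv (hf.differentiable one_ne_zero) i (hlt · i)
      (hpos · i) (congrFun hxy i) ih
end

section
/- The gated residual map x ↦ α f(x) + (1-α) x on ℝ^d is injective whenever f : ℝ^d → ℝ^d is autoregressive with each component strictly increasing in its own coordinate and α ∈ (0,1). -/
/-- The gated residual map `x ↦ α f(x) + (1-α) x` is injective when `f` is
autoregressive with each component strictly increasing in its own coordinate and
`α ∈ (0,1)`. -/
theorem gated_residual_injective
    (d : ℕ) (f : (Fin d → ℝ) → (Fin d → ℝ)) (α : ℝ) (hα : α ∈ Set.Ioo (0 : ℝ) 1)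
    (hauto : ∀ (i : Fin d) (x y : Fin d → ℝ), (∀ j : Fin d, j ≤ i → x j = y j) →
      f x i = f y i)
    (hmono : ∀ (i : Fin d) (x : Fin d → ℝ),
      StrictMono (fun t : ℝ => f (Function.update x i t) i)) :
    Function.Injective (fun x : Fin d → ℝ => fun i => α * f x i + (1 - α) * x i) := by
  obtain ⟨hα0, hα1⟩ := hα
  have h1α : (0:ℝ) < 1 - α := by linarith
  intro x y hxy
  have hpt : ∀ i : Fin d, α * f x i + (1 - α) * x i = α * f y i + (1 - α) * y i :=
    fun i => congrFun hxy i
  have key : ∀ n : ℕ, ∀ i : Fin d, (i : ℕ) = n → x i = y i := by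
    intro n
    induction n using Nat.strong_induction_on with
    | _ n ih =>
      intro i hi
      have hlt : ∀ j : Fin d, j < i → x j = y j := by
        intro j hj
        exact ih j (hi ▸ hj) j rfl
      have hfx : f x i = f (Function.update y i (x i)) i := by
        apply hauto
        intro j hj
        rcases lt_or_eq_of_le hj with h | h
        · rw [Function.update_of_ne (ne_of_lt h), hlt j h]
        · subst h; rw [Function.update_self]
      have hfy : f y i = f (Function.update y i (y i)) i := by
        rw [Function.update_eq_self]
      rcases lt_trichotomy (x i) (y i) with h | h | h
      · exfalso
        have := hmono i y h
        simp only [← hfx, ← hfy] at this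
        nlinarith [hpt i]
      · exact h
      · exfalso
        have := hmono i y h
        simp only [← hfx, ← hfy] at this
        nlinarith [hpt i]
  funext i
  exact key i i rfl
end

section
/- For a block lower triangular weight matrix W ∈ ℝ^{d×(bd)} (final layer blocks of size 1×b) with strictly positive diagonal blocks, multiplied by any chain of block lower triangular matrices with strictly positive diagonal blocks and block diagonal matrices with strictly positive diagonal blocks, the resulting d×d matrix is lower triangular with strictly positive diagonal entries; hence its determinant is strictly positive. -/
/-- Product of a chain of block matrices with `d` block rows/columns, where layer `k`
maps block size `sizes k` to block size `sizes (k+1)`. -/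
def chainProd (d : ℕ) (sizes : ℕ → ℕ)
    (M : ∀ k : ℕ, Matrix (Fin d × Fin (sizes (k + 1))) (Fin d × Fin (sizes k)) ℝ) :
    ∀ l : ℕ, Matrix (Fin d × Fin (sizes l)) (Fin d × Fin (sizes 0)) ℝ
  | 0 => 1
  | l + 1 => M l * chainProd d sizes M l

/-- A final block lower triangular weight matrix `W` (row blocks of size 1) with
strictly positive diagonal blocks, multiplied by a chain of block lower triangular
matrices with strictly positive diagonal blocks (which includes block diagonal
matrices with strictly positive diagonal blocks), yields a `d × d` lower triangular
matrix with strictly positive diagonal entries; hence its determinant is positive. -/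
theorem chain_product_lower_triangular_pos_det
    (d l : ℕ) (sizes : ℕ → ℕ) (hs : ∀ k, 0 < sizes k) (h0 : sizes 0 = 1)
    (M : ∀ k : ℕ, Matrix (Fin d × Fin (sizes (k + 1))) (Fin d × Fin (sizes k)) ℝ)
    (hMlt : ∀ (k : ℕ) (p : Fin d × Fin (sizes (k + 1))) (q : Fin d × Fin (sizes k)),
      p.1 < q.1 → M k p q = 0)
    (hMpos : ∀ (k : ℕ) (i : Fin d) (x : Fin (sizes (k + 1))) (y : Fin (sizes k)),
      0 < M k (i, x) (i, y))
    (W : Matrix (Fin d) (Fin d × Fin (sizes l)) ℝ)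
    (hWlt : ∀ (i : Fin d) (q : Fin d × Fin (sizes l)), i < q.1 → W i q = 0)
    (hWpos : ∀ (i : Fin d) (y : Fin (sizes l)), 0 < W i (i, y))
    (N : Matrix (Fin d) (Fin d) ℝ)
    (hN : ∀ i j : Fin d, N i j = (W * chainProd d sizes M l) i (j, ⟨0, hs 0⟩)) :
    (∀ i j : Fin d, i < j → N i j = 0) ∧ (∀ i : Fin d, 0 < N i i) ∧ 0 < N.det := by
  have key : ∀ n, (∀ (p : Fin d × Fin (sizes n)) (q : Fin d × Fin (sizes 0)),
      p.1 < q.1 → chainProd d sizes M n p q = 0) ∧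
      (∀ (i : Fin d) (x : Fin (sizes n)) (y : Fin (sizes 0)),
        0 < chainProd d sizes M n (i, x) (i, y)) := by
    intro n
    induction n with
    | zero =>
      constructor
      · intro p q h
        simp only [chainProd, Matrix.one_apply]
        rw [if_neg]
        intro hpq
        exact absurd (congrArg Prod.fst hpq) (ne_of_lt h)
      · intro i x y
        have hx : x = y := by
          apply Fin.ext
          omega
        subst hx
        simp [chainProd, Matrix.one_apply]
    | succ n ih =>
      constructor
      · intro p q h
        show (M n * chainProd d sizes M n) p q = 0
        rw [Matrix.mul_apply]
        apply Finset.sum_eq_zero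
        intro r _
        rcases lt_or_ge p.1 r.1 with hc | hc
        · rw [hMlt n p r hc, zero_mul]
        · rw [ih.1 r q (lt_of_le_of_lt hc h), mul_zero]
      · intro i x y
        show 0 < (M n * chainProd d sizes M n) (i, x) (i, y)
        rw [Matrix.mul_apply]
        apply Finset.sum_pos'
        · intro r _
          rcases lt_trichotomy r.1 i with hc | hc | hc
          · rw [ih.1 r (i, y) hc, mul_zero]
          · obtain ⟨j, z⟩ := r
            simp only at hc
            subst hc
            exact le_of_lt (mul_pos (hMpos n j x z) (ih.2 j z y))
          · rw [hMlt n (i, x) r hc, zero_mul]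
        · exact ⟨(i, ⟨0, hs n⟩), Finset.mem_univ _,
            mul_pos (hMpos n i x _) (ih.2 i _ y)⟩
  have hlt : ∀ i j : Fin d, i < j → N i j = 0 := by
    intro i j hij
    rw [hN, Matrix.mul_apply]
    apply Finset.sum_eq_zero
    intro r _
    rcases lt_or_ge i r.1 with hc | hc
    · rw [hWlt i r hc, zero_mul]
    · rw [(key l).1 r (j, ⟨0, hs 0⟩) (lt_of_le_of_lt hc hij), mul_zero]
  have hpos : ∀ i : Fin d, 0 < N i i := by
    intro i
    rw [hN, Matrix.mul_apply]
    apply Finset.sum_pos'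
    · intro r _
      rcases lt_trichotomy r.1 i with hc | hc | hc
      · rw [(key l).1 r (i, ⟨0, hs 0⟩) hc, mul_zero]
      · obtain ⟨j, z⟩ := r
        simp only at hc
        subst hc
        exact le_of_lt (mul_pos (hWpos j z) ((key l).2 j z _))
      · rw [hWlt i r hc, zero_mul]
    · exact ⟨(i, ⟨0, hs l⟩), Finset.mem_univ _,
        mul_pos (hWpos i _) ((key l).2 i _ _)⟩
  refine ⟨hlt, hpos, ?_⟩
  have hbt : N.BlockTriangular OrderDual.toDual := by
    intro i j hij
    exact hlt i j hij
  rw [Matrix.det_of_lowerTriangular N hbt]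
  exact Finset.prod_pos fun i _ => hpos i
end
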